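/- Budget-neutral implementability in the linear model: with MD(e) = d·e, MAC(e) = m·(E - e), and price p with 0 ≤ p < mE, there exist σ ≥ 0 and τ > 0 such that (i) the firm facing effective price p + σ and tax τ chooses exactly e* = e*(p+σ) = (mE - p - σ)/(d+m) (i.e., MAC(e*) = p + σ + τ), (ii) τ = MD(e*) = d·e*, and (iii) budget neutrality τ·e* = σ·(E - e*) holds; moreover σ is uniquely determined as the solution of d·((mE - p - σ)/(d+m))² = σ·(E - (mE - p - σ)/(d+m)) in the relevant range, and such a solution exists in [0, mE - p) by the intermediate value theorem. -/

import Mathlib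

/-- Budget-neutral implementability in the linear model: for `0 ≤ p < mE`
there exist `σ ≥ 0` and `τ > 0` implementing the social optimum
`e* = (mE - p - σ)/(d+m)` (i.e. `MAC e* = p + σ + τ`), with `τ = d·e*` and
budget neutrality `τ·e* = σ·(E - e*)`; moreover `σ` is unique in `[0, mE - p)`. -/
theorem stmt16
    (d m E p : ℝ)
    (hd : 0 < d) (hm : 0 < m) (hE : 0 < E)
    (hp0 : 0 ≤ p) (hpE : p < m * E) :
    (∃ σ τ : ℝ, 0 ≤ σ ∧ σ < m * E - p ∧ 0 < τ ∧
      (let estar := (m * E - p - σ) / (d + m);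
        m * (E - estar) = p + σ + τ ∧ τ = d * estar ∧
        τ * estar = σ * (E - estar))) ∧
    (∀ σ₁ σ₂ : ℝ,
      0 ≤ σ₁ → σ₁ < m * E - p →
      0 ≤ σ₂ → σ₂ < m * E - p →
      (d * ((m * E - p - σ₁) / (d + m))) * ((m * E - p - σ₁) / (d + m)) =
        σ₁ * (E - (m * E - p - σ₁) / (d + m)) →
      (d * ((m * E - p - σ₂) / (d + m))) * ((m * E - p - σ₂) / (d + m)) =
        σ₂ * (E - (m * E - p - σ₂) / (d + m)) →
      σ₁ = σ₂) := by
  have hk : (0:ℝ) < d + m := by linarith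
  have hk0 : (d + m : ℝ) ≠ 0 := ne_of_gt hk
  have hA : 0 < m * E - p := by linarith
  have hdEp : 0 < d * E + p := by nlinarith
  have hB : 0 < 2 * d * (m * E - p) + (d + m) * (d * E + p) := by
    have h1 : 0 < 2 * d * (m * E - p) := by positivity
    have h2 : 0 < (d + m) * (d * E + p) := by positivity
    linarith
  constructor
  · set B := 2 * d * (m * E - p) + (d + m) * (d * E + p) with hB_def
    have hdisc : (0:ℝ) ≤ B ^ 2 + 4 * m * d * (m * E - p) ^ 2 := by positivity
    set s := Real.sqrt (B ^ 2 + 4 * m * d * (m * E - p) ^ 2) with hs_def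
    have hs2 : s ^ 2 = B ^ 2 + 4 * m * d * (m * E - p) ^ 2 := Real.sq_sqrt hdisc
    have hs0 : 0 ≤ s := Real.sqrt_nonneg _
    have hsB : B < s := by
      nlinarith [mul_pos (mul_pos (mul_pos (by norm_num : (0:ℝ)<4) hm) hd) (mul_pos hA hA)]
    set σ := (s - B) / (2 * m) with hσ_def
    have hσ0 : 0 ≤ σ := by
      apply div_nonneg <;> linarith
    have hkey : m * σ ^ 2 + B * σ - d * (m * E - p) ^ 2 = 0 := by
      have h2m : (2 * m : ℝ) ≠ 0 := by positivity
      have hre : m * σ ^ 2 + B * σ - d * (m * E - p) ^ 2 = (s ^ 2 - B ^ 2 - 4 * m * d * (m * E - p) ^ 2) / (4 * m) := by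
        rw [hσ_def]; field_simp; ring
      rw [hre, hs2]; ring
    have hσA : σ < m * E - p := by
      rw [hσ_def, div_lt_iff₀ (by positivity)]
      have hBgt : 2 * d * (m * E - p) < B := by
        rw [hB_def]; nlinarith [mul_pos hk hdEp]
      nlinarith [hs2, hB, hBgt, mul_pos hm hA,
        mul_pos (mul_pos hm hd) (mul_pos hA hA),
        mul_pos (mul_pos hm hm) (mul_pos hA hA),
        mul_pos (mul_pos hm hA) hB]
    refine ⟨σ, d * ((m * E - p - σ) / (d + m)), hσ0, hσA,
      mul_pos hd (div_pos (by linarith) hk), ?_, ?_, ?_⟩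
    · field_simp
      ring
    · ring_nf
    · rw [hB_def] at hkey
      clear_value σ
      field_simp
      linear_combination (-1) * hkey
  · intro σ₁ σ₂ h10 h1A h20 h2A h1 h2
    field_simp at h1 h2
    have hz : (σ₁ - σ₂) *
        ((m * (σ₁ + σ₂) + (2 * d * (m * E - p) + (d + m) * (d * E + p))) * (d + m)) = 0 := by
      linear_combination (d + m) * (h2 - h1)
    clear h1 h2
    rcases mul_eq_zero.mp hz with h | h
    · linarith
    · exfalso
      have h3 : 0 ≤ m * (σ₁ + σ₂) := mul_nonneg hm.le (by linarith)
      have hpos : 0 < (m * (σ₁ + σ₂) + (2 * d * (m * E - p) + (d + m) * (d * E + p))) * (d + m) :=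
        mul_pos (by linarith) hk
      exact absurd h (ne_of_gt hpos)
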